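/- Let $p$ be a prime and $q$ a prime with $q \ne p$, $\ell \ge 1$, $0 \le k \le \ell-1$. The preimage under $\mathrm{res}^\ell_{\ell-1} : R_\ell \to R_{\ell-1}$ of the ideal $J_{\ell-1,k}(q)$ equals $J_{\ell,k}(q)$. The same holds with $q$ replaced by $0$: $(\mathrm{res}^\ell_{\ell-1})^{-1}(J_{\ell-1,k}(0)) = J_{\ell,k}(0)$. -/

import Mathlib

/-! We model the Burnside ring of the cyclic group `C_{p^ℓ}` via its (injective) mark
homomorphism: `Xe p ℓ i` is the vector of marks of the transitive `C_{p^ℓ}`-set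
`C_{p^ℓ}/C_{p^i}`, namely `j ↦ #(fixed points of C_{p^j})`, stabilized for `j ≥ ℓ`.
The Burnside ring `BR p ℓ` is the subring of `ℕ → ℤ` generated by these mark vectors. -/

/-- Marks of the basis element `X_{ℓ,i} = [C_{p^ℓ}/C_{p^i}]`. -/
def Xe (p l i : ℕ) : ℕ → ℤ := fun j => if min j l ≤ i then (p : ℤ) ^ (l - i) else 0

/-- The Burnside ring of `C_{p^ℓ}`, realized as a subring of the ghost ring `ℕ → ℤ`. -/
def BR (p l : ℕ) : Subring (ℕ → ℤ) := Subring.closure (Set.range (Xe p l))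

/-- The basis element `X_{ℓ,i}` as an element of the Burnside ring. -/
def Xb (p l i : ℕ) : BR p l := ⟨Xe p l i, Subring.subset_closure ⟨i, rfl⟩⟩

/-- `F_{ℓ,i} = X_{ℓ,i} - p^{ℓ-i}` in the Burnside ring. -/
def Fb (p l i : ℕ) : BR p l := Xb p l i - (p : BR p l) ^ (l - i)

/-- `F_{ℓ,i} = X_{ℓ,i} - p^{ℓ-i}` as a mark vector. -/
def Fe (p l i : ℕ) : ℕ → ℤ := Xe p l i - (p : ℕ → ℤ) ^ (l - i)

/-- Restriction `res^ℓ_k` to the subgroup `C_{p^k}` on mark vectors: truncation of marks. -/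
def resA (k : ℕ) : (ℕ → ℤ) →+* (ℕ → ℤ) :=
  Pi.ringHom fun j => Pi.evalRingHom (fun _ => ℤ) (min j k)

/-- Additive transfer (induction) `ind^{m+1}_m` on mark vectors. -/
def indA (p m : ℕ) (a : ℕ → ℤ) : ℕ → ℤ := fun j => if j ≤ m then p * a j else 0

/-- Multiplicative transfer (norm) `jnd^{m+1}_m` on mark vectors. -/
def jndA (p m : ℕ) (a : ℕ → ℤ) : ℕ → ℤ := fun j => if j ≤ m then (a j) ^ p else a m

/-- The ideal `J_{ℓ,k}(x) = (x, F_{ℓ,k}, …, F_{ℓ,ℓ-1})` of the Burnside ring. -/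
def Jb (p l k : ℕ) (x : ℤ) : Ideal (BR p l) :=
  Ideal.span (insert (x : BR p l) (Fb p l '' Set.Ico k l))

/-!
In mark coordinates the Burnside ring `R_ℓ` consists of the vectors `f`, constant from `ℓ` on,
with `f j ≡ f (j+1) [ZMOD p^(ℓ-j)]`; every such `f` is `f 0 + ∑ mᵢ F_{ℓ,i}` with
`p^(ℓ-i) mᵢ = f i - f (i+1)`. When `x` is prime to `p` or `x = 0`, the condition `x ∣ mᵢ` is
equivalent to `x ∣ f i - f (i+1)`, so `J_{ℓ,k}(x)` is exactly the set of `f` whose marks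
`f 0, …, f k` are divisible by `x`. Restriction to `C_{p^m}` with `k ≤ m` truncates marks
without changing `f 0, …, f k`, whence the preimage statement.
-/

open Finset

section

variable {p l : ℕ}

/-- For `j ≥ l` the modulus is `p ^ (l - j) = 1`. -/
def markCongr (p l : ℕ) : Subring (ℕ → ℤ) :=
  (⨅ j, (Pi.evalRingHom (fun _ => ℤ) j).eqLocus (Pi.evalRingHom _ (min j l))) ⊓
    ⨅ j, ((Int.castRingHom (ZMod (p ^ (l - j)))).comp (Pi.evalRingHom _ (j + 1))).eqLocus
      ((Int.castRingHom _).comp (Pi.evalRingHom _ j))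

theorem mem_markCongr {f : ℕ → ℤ} :
    f ∈ markCongr p l ↔ (∀ j, f j = f (min j l)) ∧ ∀ j, (p : ℤ) ^ (l - j) ∣ f j - f (j + 1) := by
  simp [markCongr, Subring.mem_iInf, RingHom.mem_eqLocus, ZMod.intCast_eq_intCast_iff_dvd_sub]

theorem Fe_apply (i j : ℕ) : Fe p l i j = if i < min j l then -(p : ℤ) ^ (l - i) else 0 := by
  by_cases h : min j l ≤ i
  · simp [Fe, Xe, h, Nat.not_lt.mpr h]
  · simp [Fe, Xe, h, Nat.lt_of_not_le h]

theorem Xe_mem_markCongr (i : ℕ) : Xe p l i ∈ markCongr p l := by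
  refine mem_markCongr.2 ⟨fun j => by simp [Xe], fun j => ?_⟩
  rcases le_or_gt l j with hlj | hjl
  · simp [Nat.sub_eq_zero_of_le hlj]
  · have h1 : min (j + 1) l = j + 1 := by omega
    simp only [Xe, h1, min_eq_left hjl.le]
    split_ifs <;> simp <;> first | omega | exact pow_dvd_pow _ (by omega)

theorem BR_le_markCongr : BR p l ≤ markCongr p l :=
  Subring.closure_le.2 <| Set.range_subset_iff.2 Xe_mem_markCongr

/-- The coefficient `mᵢ` of `F_{l,i}` in `f = f 0 + ∑ mᵢ F_{l,i}`. -/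
def Fcoeff (p l : ℕ) (f : ℕ → ℤ) (i : ℕ) : ℤ := (f i - f (i + 1)) / (p : ℤ) ^ (l - i)

theorem pow_mul_Fcoeff {f : ℕ → ℤ} (hf : f ∈ markCongr p l) (i : ℕ) :
    (p : ℤ) ^ (l - i) * Fcoeff p l f i = f i - f (i + 1) :=
  Int.mul_ediv_cancel' ((mem_markCongr.1 hf).2 i)

theorem sum_mul_Fe_apply (m : ℕ → ℤ) (j : ℕ) :
    ∑ i ∈ range l, m i * Fe p l i j = -∑ i ∈ range (min j l), (p : ℤ) ^ (l - i) * m i := by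
  simp only [Fe_apply, mul_ite, mul_zero]
  rw [← sum_range_add_sum_Ico _ (min_le_right j l),
    sum_ite_of_true fun i hi => mem_range.1 hi, sum_ite_of_false fun i hi => by simp at hi; omega]
  simp [mul_comm]

theorem eq_intCast_add_sum_Fe {f : ℕ → ℤ} (hf : f ∈ markCongr p l) :
    f = (f 0 : ℕ → ℤ) + ∑ i ∈ range l, (Fcoeff p l f i : ℕ → ℤ) * Fe p l i := by
  funext j
  simp only [Pi.add_apply, Finset.sum_apply, Pi.mul_apply, Pi.intCast_apply, sum_mul_Fe_apply,
    Int.cast_id]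
  rw [sum_congr rfl fun i _ => pow_mul_Fcoeff hf i, sum_range_sub', (mem_markCongr.1 hf).1 j]
  ring

theorem Fe_mem_BR (i : ℕ) : Fe p l i ∈ BR p l :=
  sub_mem (Subring.subset_closure ⟨i, rfl⟩) (pow_mem (natCast_mem _ p) _)

theorem BR_eq_markCongr : BR p l = markCongr p l := by
  refine le_antisymm BR_le_markCongr fun f hf => ?_
  rw [eq_intCast_add_sum_Fe hf]
  exact add_mem (intCast_mem _ _) (sum_mem fun i _ => mul_mem (intCast_mem _ _) (Fe_mem_BR i))

theorem coe_Fb (i : ℕ) : ((Fb p l i : BR p l) : ℕ → ℤ) = Fe p l i := rfl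

theorem eq_intCast_add_sum_Fb (a : BR p l) :
    a = ((a : ℕ → ℤ) 0 : BR p l) +
      ∑ i ∈ range l, (Fcoeff p l a i : BR p l) * Fb p l i := by
  apply Subtype.ext
  push_cast [coe_Fb]
  exact eq_intCast_add_sum_Fe (BR_le_markCongr a.2)

theorem resA_apply (k : ℕ) (f : ℕ → ℤ) (j : ℕ) : resA k f j = f (min j k) := rfl

theorem resA_apply_of_le {k j : ℕ} (f : ℕ → ℤ) (hj : j ≤ k) : resA k f j = f j := by
  rw [resA_apply, min_eq_left hj]

theorem resA_mem_BR {m : ℕ} (hml : m ≤ l) {f : ℕ → ℤ} (hf : f ∈ BR p l) :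
    resA m f ∈ BR p m := by
  rw [BR_eq_markCongr, mem_markCongr] at hf ⊢
  refine ⟨fun j => by simp [resA_apply], fun j => ?_⟩
  rcases le_or_gt m j with hmj | hjm
  · simp [Nat.sub_eq_zero_of_le hmj]
  · rw [resA_apply_of_le f hjm.le, resA_apply_of_le f hjm]
    exact (pow_dvd_pow _ (by omega)).trans (hf.2 j)

variable {k : ℕ} {x : ℤ}

theorem dvd_apply_of_mem_Jb {a : BR p l} (ha : a ∈ Jb p l k x) {j : ℕ} (hj : j ≤ k) :
    x ∣ (a : ℕ → ℤ) j := by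
  let I : Ideal (BR p l) :=
    (Ideal.span {x}).comap ((Pi.evalRingHom (fun _ => ℤ) j).comp (BR p l).subtype)
  have hJI : Jb p l k x ≤ I := by
    rw [Jb, Ideal.span_le]
    rintro _ (rfl | ⟨i, ⟨hki, -⟩, rfl⟩)
    · simp [I]
    · have : ¬i < min j l := by omega
      simp [I, coe_Fb, Fe_apply, this]
  simpa [I, Ideal.mem_span_singleton] using hJI ha

theorem dvd_of_dvd_pow_mul (hp : p ≠ 0) (hx : IsCoprime x p ∨ x = 0) {n : ℕ} {c : ℤ}
    (h : x ∣ (p : ℤ) ^ n * c) : x ∣ c := by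
  rcases hx with hx | rfl
  · exact hx.pow_right.dvd_of_dvd_mul_left h
  · simpa [hp] using h

theorem mem_Jb_of_forall_dvd (hp : p ≠ 0) (hx : IsCoprime x p ∨ x = 0) {a : BR p l}
    (ha : ∀ j ≤ k, x ∣ (a : ℕ → ℤ) j) : a ∈ Jb p l k x := by
  have hxJ : (x : BR p l) ∈ Jb p l k x := Ideal.subset_span (Set.mem_insert _ _)
  rw [eq_intCast_add_sum_Fb a]
  refine add_mem ?_ (sum_mem fun i hi => ?_)
  · obtain ⟨d, hd⟩ := ha 0 (Nat.zero_le k)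
    rw [hd, Int.cast_mul]
    exact Ideal.mul_mem_right _ _ hxJ
  by_cases hik : i < k
  · obtain ⟨d, hd⟩ : x ∣ Fcoeff p l a i := dvd_of_dvd_pow_mul hp hx <| by
      rw [pow_mul_Fcoeff (BR_le_markCongr a.2)]
      exact dvd_sub (ha i hik.le) (ha (i + 1) hik)
    rw [hd, Int.cast_mul, mul_assoc]
    exact Ideal.mul_mem_right _ _ hxJ
  · refine Ideal.mul_mem_left _ _ (Ideal.subset_span (Set.mem_insert_of_mem _ ?_))
    exact ⟨i, ⟨not_lt.1 hik, mem_range.1 hi⟩, rfl⟩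

theorem mem_Jb_iff (hp : p ≠ 0) (hx : IsCoprime x p ∨ x = 0) (a : BR p l) :
    a ∈ Jb p l k x ↔ ∀ j ≤ k, x ∣ (a : ℕ → ℤ) j :=
  ⟨fun ha _ hj => dvd_apply_of_mem_Jb ha hj, mem_Jb_of_forall_dvd hp hx⟩

theorem exists_resA_mem_Jb_iff (hp : p ≠ 0) (hx : IsCoprime x p ∨ x = 0) {m : ℕ}
    (hkm : k ≤ m) (hml : m ≤ l) (a : BR p l) :
    (∃ b : BR p m, (b : ℕ → ℤ) = resA m a ∧ b ∈ Jb p m k x) ↔ a ∈ Jb p l k x := by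
  simp only [mem_Jb_iff hp hx]
  constructor
  · rintro ⟨b, hb, hbJ⟩ j hj
    simpa [hb, resA_apply_of_le _ (hj.trans hkm)] using hbJ j hj
  · intro ha
    refine ⟨⟨resA m a, resA_mem_BR hml a.2⟩, rfl, fun j hj => ?_⟩
    simpa [resA_apply_of_le _ (hj.trans hkm)] using ha j hj

end

theorem res_preimage_Jq_general (p q l k : ℕ) (hp : p.Prime) (hq : q.Prime) (hpq : q ≠ p)
    (hk : k ≤ l - 1) :
    (∀ a : BR p l,
      (∃ b : BR p (l-1), (b : ℕ → ℤ) = resA (l-1) (a : ℕ → ℤ) ∧ b ∈ Jb p (l-1) k (q : ℤ))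
        ↔ a ∈ Jb p l k (q : ℤ)) ∧
    (∀ a : BR p l,
      (∃ b : BR p (l-1), (b : ℕ → ℤ) = resA (l-1) (a : ℕ → ℤ) ∧ b ∈ Jb p (l-1) k 0)
        ↔ a ∈ Jb p l k 0) := by
  have hqp : IsCoprime (q : ℤ) p := Nat.isCoprime_iff_coprime.2 ((Nat.coprime_primes hq hp).2 hpq)
  exact ⟨exists_resA_mem_Jb_iff hp.ne_zero (.inl hqp) hk (Nat.sub_le l 1),
    exists_resA_mem_Jb_iff hp.ne_zero (.inr rfl) hk (Nat.sub_le l 1)⟩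

/-- For a prime `q ≠ p` and `0 ≤ k ≤ ℓ-1`, the preimage of `J_{ℓ-1,k}(q)` under
`res^ℓ_{ℓ-1} : R_ℓ → R_{ℓ-1}` equals `J_{ℓ,k}(q)`; likewise with `q` replaced by `0`. -/
theorem res_preimage_Jq (p q l k : ℕ) (hp : p.Prime) (hq : q.Prime) (hpq : q ≠ p)
    (hl : 1 ≤ l) (hk : k ≤ l - 1) :
    (∀ a : BR p l,
      (∃ b : BR p (l-1), (b : ℕ → ℤ) = resA (l-1) (a : ℕ → ℤ) ∧ b ∈ Jb p (l-1) k (q : ℤ))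
        ↔ a ∈ Jb p l k (q : ℤ)) ∧
    (∀ a : BR p l,
      (∃ b : BR p (l-1), (b : ℕ → ℤ) = resA (l-1) (a : ℕ → ℤ) ∧ b ∈ Jb p (l-1) k 0)
        ↔ a ∈ Jb p l k 0) :=
  res_preimage_Jq_general p q l k hp hq hpq hk
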